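/- arXiv:2105.14635 — 3 statements merged into one kernel-verified Lean document; each statement's English description precedes it below -/
import Mathlib

section
/- Let G = (V,E) be a finite simple graph with Laplacian L = D - A, and let φ, ψ : V → ℝ satisfy ⟨φ, (D+A)φ⟩ ≤ ε‖φ‖²_{ℓ²} and ⟨ψ, (D+A)ψ⟩ ≤ ε‖ψ‖²_{ℓ²} for some ε ≥ 0. Then the pointwise product φ·ψ satisfies ⟨φ·ψ, L(φ·ψ)⟩ ≤ 2ε(‖φ‖²_{ℓ^∞}‖ψ‖²_{ℓ²} + ‖φ‖²_{ℓ²}‖ψ‖²_{ℓ^∞}). -/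
open Matrix Finset

/-! Writing `a b - c d = ((a + c)(b - d) + (a - c)(b + d)) / 2` bounds each edge term
`(φ_i ψ_i - φ_j ψ_j)²` of the Dirichlet energy of `φ ψ` by
`2 ‖ψ‖²_∞ (φ_i + φ_j)² + 2 ‖φ‖²_∞ (ψ_i + ψ_j)²`, since differences of values of `ψ`
are at most `2 ‖ψ‖_∞` in absolute value. Summing over the edges turns the right-hand side
into the quadratic forms of the signless Laplacian `D + A` at `φ` and `ψ`. -/

section Pointwise

variable {R : Type*} [Field R] [LinearOrder R] [IsStrictOrderedRing R]

lemma sub_sq_le_four_mul_sq {a b M : R} (ha : |a| ≤ M) (hb : |b| ≤ M) :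
    (a - b) ^ 2 ≤ 4 * M ^ 2 := by
  have hab : |a - b| ≤ 2 * M := by linarith [abs_sub a b]
  calc (a - b) ^ 2 = |a - b| ^ 2 := (sq_abs _).symm
    _ ≤ (2 * M) ^ 2 := pow_le_pow_left₀ (abs_nonneg _) hab 2
    _ = 4 * M ^ 2 := by ring

lemma mul_sub_mul_sq_le {a b c d M N : R} (ha : |a| ≤ M) (hc : |c| ≤ M)
    (hb : |b| ≤ N) (hd : |d| ≤ N) :
    (a * b - c * d) ^ 2 ≤ 2 * N ^ 2 * (a + c) ^ 2 + 2 * M ^ 2 * (b + d) ^ 2 := by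
  have hbd := sub_sq_le_four_mul_sq hb hd
  have hac := sub_sq_le_four_mul_sq ha hc
  calc (a * b - c * d) ^ 2 = ((a + c) * (b - d) + (a - c) * (b + d)) ^ 2 / 4 := by ring
    _ ≤ ((a + c) ^ 2 * (b - d) ^ 2 + (a - c) ^ 2 * (b + d) ^ 2) / 2 := by
      nlinarith [sq_nonneg ((a + c) * (b - d) - (a - c) * (b + d))]
    _ ≤ ((a + c) ^ 2 * (4 * N ^ 2) + (4 * M ^ 2) * (b + d) ^ 2) / 2 := by
      gcongr
    _ = 2 * N ^ 2 * (a + c) ^ 2 + 2 * M ^ 2 * (b + d) ^ 2 := by ring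

end Pointwise

namespace SimpleGraph

variable {V R : Type*} [Fintype V] [DecidableEq V] (G : SimpleGraph V) [DecidableRel G.Adj]

theorem dotProduct_mulVec_degMatrix_add_adjMatrix [Field R] [CharZero R] (x : V → R) :
    x ⬝ᵥ ((G.degMatrix R + G.adjMatrix R) *ᵥ x) =
      (∑ i : V, ∑ j : V, if G.Adj i j then (x i + x j) ^ 2 else 0) / 2 := by
  simp_rw [add_mulVec, dotProduct_add, dotProduct_mulVec_degMatrix, dotProduct_mulVec_adjMatrix,
    ← sum_add_distrib, degree_eq_sum_if_adj, sum_mul, ite_mul, one_mul, zero_mul,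
    ← sum_add_distrib, ite_add_ite, add_zero]
  rw [← add_self_div_two (∑ i : V, ∑ j : V, _)]
  conv_lhs => enter [1, 2, 2, i, 2, j]; rw [if_congr (G.adj_comm i j) rfl rfl]
  conv_lhs => enter [1, 2]; rw [Finset.sum_comm]
  simp_rw [← sum_add_distrib, ite_add_ite]
  congr 2 with i
  congr 2 with j
  ring_nf

end SimpleGraph

theorem product_dirichlet_energy_bound_general
    {V : Type*} [Fintype V] [DecidableEq V]
    (G : SimpleGraph V) [DecidableRel G.Adj]
    (φ ψ : V → ℝ) (ε : ℝ)
    (hφ : φ ⬝ᵥ ((G.degMatrix ℝ + G.adjMatrix ℝ) *ᵥ φ) ≤ ε * ∑ v, φ v ^ 2)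
    (hψ : ψ ⬝ᵥ ((G.degMatrix ℝ + G.adjMatrix ℝ) *ᵥ ψ) ≤ ε * ∑ v, ψ v ^ 2) :
    (fun v => φ v * ψ v) ⬝ᵥ (G.lapMatrix ℝ *ᵥ fun v => φ v * ψ v)
      ≤ 2 * ε * ((⨆ v, |φ v|) ^ 2 * ∑ v, ψ v ^ 2
          + (∑ v, φ v ^ 2) * (⨆ v, |ψ v|) ^ 2) := by
  set Mφ : ℝ := ⨆ v, |φ v|
  set Mψ : ℝ := ⨆ v, |ψ v|
  have hMφ (v : V) : |φ v| ≤ Mφ :=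
    le_ciSup (f := fun v => |φ v|) (Set.finite_range _).bddAbove v
  have hMψ (v : V) : |ψ v| ≤ Mψ :=
    le_ciSup (f := fun v => |ψ v|) (Set.finite_range _).bddAbove v
  have edge_bound (i j : V) : (if G.Adj i j then (φ i * ψ i - φ j * ψ j) ^ 2 else 0) ≤
      2 * Mψ ^ 2 * (if G.Adj i j then (φ i + φ j) ^ 2 else 0) +
        2 * Mφ ^ 2 * (if G.Adj i j then (ψ i + ψ j) ^ 2 else 0) := by
    split_ifs
    · exact mul_sub_mul_sq_le (hMφ i) (hMφ j) (hMψ i) (hMψ j)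
    · simp
  rw [← toLinearMap₂'_apply', SimpleGraph.lapMatrix_toLinearMap₂']
  calc (∑ i, ∑ j, if G.Adj i j then (φ i * ψ i - φ j * ψ j) ^ 2 else 0) / 2
      ≤ 2 * Mψ ^ 2 * ((∑ i, ∑ j, if G.Adj i j then (φ i + φ j) ^ 2 else 0) / 2) +
          2 * Mφ ^ 2 * ((∑ i, ∑ j, if G.Adj i j then (ψ i + ψ j) ^ 2 else 0) / 2) := by
        simp only [mul_div_assoc', ← add_div, mul_sum, ← sum_add_distrib]
        gcongr with i _ j _
        exact edge_bound i j
    _ ≤ 2 * Mψ ^ 2 * (ε * ∑ v, φ v ^ 2) + 2 * Mφ ^ 2 * (ε * ∑ v, ψ v ^ 2) := by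
        rw [← G.dotProduct_mulVec_degMatrix_add_adjMatrix,
          ← G.dotProduct_mulVec_degMatrix_add_adjMatrix]
        gcongr
    _ = 2 * ε * (Mφ ^ 2 * ∑ v, ψ v ^ 2 + (∑ v, φ v ^ 2) * Mψ ^ 2) := by ring

theorem product_dirichlet_energy_bound
    {V : Type*} [Fintype V] [DecidableEq V] [Nonempty V]
    (G : SimpleGraph V) [DecidableRel G.Adj]
    (φ ψ : V → ℝ) (ε : ℝ) (hε : 0 ≤ ε)
    (hφ : φ ⬝ᵥ ((G.degMatrix ℝ + G.adjMatrix ℝ) *ᵥ φ) ≤ ε * ∑ v, φ v ^ 2)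
    (hψ : ψ ⬝ᵥ ((G.degMatrix ℝ + G.adjMatrix ℝ) *ᵥ ψ) ≤ ε * ∑ v, ψ v ^ 2) :
    (fun v => φ v * ψ v) ⬝ᵥ (G.lapMatrix ℝ *ᵥ fun v => φ v * ψ v)
      ≤ 2 * ε * ((⨆ v, |φ v|) ^ 2 * ∑ v, ψ v ^ 2
          + (∑ v, φ v ^ 2) * (⨆ v, |ψ v|) ^ 2) :=
  product_dirichlet_energy_bound_general G φ ψ ε hφ hψ
end

section
/- Let G = (V,E) be a finite simple graph with Laplacian L = D - A and let φ, ψ : V → ℝ satisfy ⟨φ,(D+A)φ⟩ ≤ ε‖φ‖²_{ℓ²} and ⟨ψ,(D+A)ψ⟩ ≤ ε‖ψ‖²_{ℓ²}, with φ·ψ not identically zero. Then the Rayleigh quotient of the pointwise product satisfies ⟨φ·ψ, L(φ·ψ)⟩ / ‖φ·ψ‖²_{ℓ²} ≤ 2ε(‖φ‖²_{ℓ^∞}‖ψ‖²_{ℓ²} + ‖φ‖²_{ℓ²}‖ψ‖²_{ℓ^∞}) / ‖φ·ψ‖²_{ℓ²}. -/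
/-!
Writing `φψ(i) - φψ(j) = ψ(i) (φ(i) + φ(j)) - φ(j) (ψ(i) + ψ(j))` and using `(x - y)² ≤ 2x² + 2y²`,
each edge term of the Laplacian form of `φψ` is bounded by `2‖ψ‖²_∞` times an edge term of the
signless Laplacian form of `φ` plus `2‖φ‖²_∞` times one of `ψ`. Summing over edges and inserting
the hypotheses on the signless forms gives the bound before dividing by `‖φψ‖²`.
-/

open Matrix Finset

theorem sq_mul_sub_mul_le {R : Type*} [CommRing R] [LinearOrder R] [IsStrictOrderedRing R]
    (a b c d : R) :
    (a * b - c * d) ^ 2 ≤ 2 * b ^ 2 * (a + c) ^ 2 + 2 * c ^ 2 * (b + d) ^ 2 := by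
  have hsplit : a * b - c * d = b * (a + c) - c * (b + d) := by ring
  rw [hsplit]
  nlinarith [sq_nonneg (b * (a + c) + c * (b + d))]

namespace SimpleGraph

variable {V : Type*} [Fintype V] [DecidableEq V] (G : SimpleGraph V) [DecidableRel G.Adj]

theorem dotProduct_degMatrix_add_adjMatrix_mulVec {R : Type*} [Field R] [CharZero R]
    (x : V → R) :
    x ⬝ᵥ ((G.degMatrix R + G.adjMatrix R) *ᵥ x) =
      (∑ i, ∑ j, if G.Adj i j then (x i + x j) ^ 2 else 0) / 2 := by
  simp_rw [add_mulVec, dotProduct_add, dotProduct_mulVec_degMatrix, dotProduct_mulVec_adjMatrix,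
    ← sum_add_distrib, degree_eq_sum_if_adj, sum_mul, ite_mul, one_mul, zero_mul,
    ← sum_add_distrib, ite_add_ite, add_zero]
  rw [← add_self_div_two (∑ i : V, ∑ j : V, _)]
  conv_lhs => enter [1, 2, 2, i, 2, j]; rw [if_congr (G.adj_comm i j) rfl rfl]
  conv_lhs => enter [1, 2]; rw [Finset.sum_comm]
  simp_rw [← sum_add_distrib, ite_add_ite]
  congr 2 with i
  congr 2 with j
  ring_nf

theorem dotProduct_lapMatrix_mulVec_mul_le (φ ψ : V → ℝ) {Mφ Mψ : ℝ}
    (hMφ : ∀ v, |φ v| ≤ Mφ) (hMψ : ∀ v, |ψ v| ≤ Mψ) :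
    (φ * ψ) ⬝ᵥ (G.lapMatrix ℝ *ᵥ (φ * ψ)) ≤
      2 * (Mψ ^ 2 * φ ⬝ᵥ ((G.degMatrix ℝ + G.adjMatrix ℝ) *ᵥ φ)
        + Mφ ^ 2 * ψ ⬝ᵥ ((G.degMatrix ℝ + G.adjMatrix ℝ) *ᵥ ψ)) := by
  have hedge : ∀ i j, (φ i * ψ i - φ j * ψ j) ^ 2 ≤
      2 * Mψ ^ 2 * (φ i + φ j) ^ 2 + 2 * Mφ ^ 2 * (ψ i + ψ j) ^ 2 := fun i j => by
    have hψi := abs_le.mp (hMψ i)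
    have hφj := abs_le.mp (hMφ j)
    nlinarith [sq_mul_sub_mul_le (φ i) (ψ i) (φ j) (ψ j), sq_le_sq' hψi.1 hψi.2,
      sq_le_sq' hφj.1 hφj.2, sq_nonneg (φ i + φ j), sq_nonneg (ψ i + ψ j)]
  calc (φ * ψ) ⬝ᵥ (G.lapMatrix ℝ *ᵥ (φ * ψ))
      = (∑ i, ∑ j, if G.Adj i j then (φ i * ψ i - φ j * ψ j) ^ 2 else 0) / 2 := by
        rw [← toLinearMap₂'_apply', lapMatrix_toLinearMap₂']
        rfl
    _ ≤ (∑ i, ∑ j, (2 * Mψ ^ 2 * (if G.Adj i j then (φ i + φ j) ^ 2 else 0)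
          + 2 * Mφ ^ 2 * (if G.Adj i j then (ψ i + ψ j) ^ 2 else 0))) / 2 := by
        gcongr with i _ j _
        split_ifs
        · exact hedge i j
        · simp
    _ = _ := by
        rw [dotProduct_degMatrix_add_adjMatrix_mulVec, dotProduct_degMatrix_add_adjMatrix_mulVec]
        simp only [sum_add_distrib, ← mul_sum]
        ring

end SimpleGraph

theorem product_rayleigh_quotient_bound_general
    {V : Type*} [Fintype V] [DecidableEq V]
    (G : SimpleGraph V) [DecidableRel G.Adj]
    (φ ψ : V → ℝ) (ε : ℝ)
    (hφ : φ ⬝ᵥ ((G.degMatrix ℝ + G.adjMatrix ℝ) *ᵥ φ) ≤ ε * ∑ v, φ v ^ 2)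
    (hψ : ψ ⬝ᵥ ((G.degMatrix ℝ + G.adjMatrix ℝ) *ᵥ ψ) ≤ ε * ∑ v, ψ v ^ 2) :
    ((fun v => φ v * ψ v) ⬝ᵥ (G.lapMatrix ℝ *ᵥ fun v => φ v * ψ v))
        / ∑ v, (φ v * ψ v) ^ 2
      ≤ 2 * ε * ((⨆ v, |φ v|) ^ 2 * (∑ v, ψ v ^ 2)
          + (∑ v, φ v ^ 2) * (⨆ v, |ψ v|) ^ 2) / ∑ v, (φ v * ψ v) ^ 2 := by
  have hsup : ∀ f : V → ℝ, ∀ v, |f v| ≤ ⨆ v, |f v| := fun f =>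
    le_ciSup (Set.finite_range _).bddAbove
  gcongr
  calc _ ≤ _ := G.dotProduct_lapMatrix_mulVec_mul_le φ ψ (hsup φ) (hsup ψ)
    _ ≤ 2 * ((⨆ v, |ψ v|) ^ 2 * (ε * ∑ v, φ v ^ 2) + (⨆ v, |φ v|) ^ 2 * (ε * ∑ v, ψ v ^ 2)) := by
        gcongr
    _ = _ := by ring

theorem product_rayleigh_quotient_bound
    {V : Type*} [Fintype V] [DecidableEq V] [Nonempty V]
    (G : SimpleGraph V) [DecidableRel G.Adj]
    (φ ψ : V → ℝ) (ε : ℝ) (hε : 0 ≤ ε)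
    (hφ : φ ⬝ᵥ ((G.degMatrix ℝ + G.adjMatrix ℝ) *ᵥ φ) ≤ ε * ∑ v, φ v ^ 2)
    (hψ : ψ ⬝ᵥ ((G.degMatrix ℝ + G.adjMatrix ℝ) *ᵥ ψ) ≤ ε * ∑ v, ψ v ^ 2)
    (hne : 0 < ∑ v, (φ v * ψ v) ^ 2) :
    ((fun v => φ v * ψ v) ⬝ᵥ (G.lapMatrix ℝ *ᵥ fun v => φ v * ψ v))
        / ∑ v, (φ v * ψ v) ^ 2
      ≤ 2 * ε * ((⨆ v, |φ v|) ^ 2 * (∑ v, ψ v ^ 2)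
          + (∑ v, φ v ^ 2) * (⨆ v, |ψ v|) ^ 2) / ∑ v, (φ v * ψ v) ^ 2 :=
  product_rayleigh_quotient_bound_general G φ ψ ε hφ hψ
end

section
/- Let G be a d-regular finite simple graph and φ: V → ℝ satisfy (d·Id + A)φ = εφ with 0 ≤ ε < d. Let m be a vertex where |φ| attains its maximum. Then for every nonnegative integer k, ‖φ‖_{ℓ^∞} ≤ (d/(d-ε))^{2k} · (Σ_{j∈V} [(A/d)^{2k} δ_m](j)²)^{1/2} · ‖φ‖_{ℓ²}. -/
/-!
Dividing the eigenvalue equation by `d` shows that `φ` is an eigenvector of the random walk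
matrix `P = A / d` with eigenvalue `-(d - ε) / d`, hence of `P ^ (2k)` with eigenvalue
`((d - ε) / d) ^ (2k)`. Evaluating `P ^ (2k) φ` at `m` and applying Cauchy–Schwarz to the row
`m` of `P ^ (2k)`, which by symmetry is the walk distribution `P ^ (2k) δ_m`, bounds
`((d - ε) / d) ^ (2k) · |φ m|`.
-/

open Matrix Finset

namespace Matrix

variable {m n R : Type*} [Fintype n]

theorem pow_mulVec_of_mulVec_eq_smul [CommSemiring R] [DecidableEq n] {M : Matrix n n R}
    {v : n → R} {μ : R} (h : M *ᵥ v = μ • v) (k : ℕ) : M ^ k *ᵥ v = μ ^ k • v := by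
  induction k with
  | zero => simp
  | succ k ih => rw [pow_succ', ← mulVec_mulVec, ih, mulVec_smul, h, smul_smul, pow_succ]

theorem mulVec_eq_smul_of_smul_one_add_mulVec_eq_smul [Field R] [DecidableEq n]
    {A : Matrix n n R} {v : n → R} {a ε : R} (h : (a • (1 : Matrix n n R) + A) *ᵥ v = ε • v) :
    (a⁻¹ • A) *ᵥ v = ((ε - a) / a) • v := by
  rw [add_mulVec, smul_mulVec, one_mulVec] at h
  rw [smul_mulVec, div_eq_inv_mul, ← smul_smul, sub_smul, ← h, add_sub_cancel_left]

theorem abs_mulVec_apply_le_sqrt_mul_sqrt (M : Matrix m n ℝ) (v : n → ℝ) (i : m) :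
    |(M *ᵥ v) i| ≤ √(∑ j, M i j ^ 2) * √(∑ j, v j ^ 2) :=
  calc |(M *ᵥ v) i| = |∑ j, M i j * v j| := rfl
    _ ≤ ∑ j, |M i j| * |v j| := (abs_sum_le_sum_abs _ _).trans_eq (by simp_rw [abs_mul])
    _ ≤ √(∑ j, |M i j| ^ 2) * √(∑ j, |v j| ^ 2) := Real.sum_mul_le_sqrt_mul_sqrt _ _ _
    _ = √(∑ j, M i j ^ 2) * √(∑ j, v j ^ 2) := by simp_rw [sq_abs]

theorem IsSymm.abs_pow_mul_abs_le [DecidableEq n] {M : Matrix n n ℝ} (hM : M.IsSymm)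
    {φ : n → ℝ} {μ : ℝ} (h : M *ᵥ φ = μ • φ) (k : ℕ) (i : n) :
    |μ| ^ k * |φ i| ≤ √(∑ j, ((M ^ k) *ᵥ Pi.single i 1) j ^ 2) * √(∑ j, φ j ^ 2) :=
  calc |μ| ^ k * |φ i| = |(M ^ k *ᵥ φ) i| := by
        rw [pow_mulVec_of_mulVec_eq_smul h, Pi.smul_apply, smul_eq_mul, abs_mul, abs_pow]
    _ ≤ √(∑ j, (M ^ k) i j ^ 2) * √(∑ j, φ j ^ 2) := abs_mulVec_apply_le_sqrt_mul_sqrt _ _ _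
    _ = √(∑ j, ((M ^ k) *ᵥ Pi.single i 1) j ^ 2) * √(∑ j, φ j ^ 2) := by
        simp_rw [mulVec_single_one, col_apply, (hM.pow k).apply]

end Matrix

theorem sup_norm_bound_via_random_walk_general
    {V : Type*} [Fintype V] [DecidableEq V]
    (G : SimpleGraph V) [DecidableRel G.Adj] (d : ℕ)
    (φ : V → ℝ) (ε : ℝ) (hε0 : 0 ≤ ε) (hεd : ε < d)
    (heig : ((d : ℝ) • (1 : Matrix V V ℝ) + G.adjMatrix ℝ) *ᵥ φ = ε • φ)
    (m : V) (hm : ∀ v : V, |φ v| ≤ |φ m|) (k : ℕ) :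
    (⨆ v, |φ v|)
      ≤ ((d : ℝ) / ((d : ℝ) - ε)) ^ (2 * k)
          * Real.sqrt (∑ j : V,
              (((((d : ℝ)⁻¹ • G.adjMatrix ℝ) ^ (2 * k)) *ᵥ Pi.single m 1) j) ^ 2)
          * Real.sqrt (∑ v, φ v ^ 2) := by
  have hd : (0 : ℝ) < d := hε0.trans_lt hεd
  have key := ((G.isSymm_adjMatrix).smul (d : ℝ)⁻¹).abs_pow_mul_abs_le
    (mulVec_eq_smul_of_smul_one_add_mulVec_eq_smul heig) (2 * k) m
  have hratio : |(ε - d) / d| ^ (2 * k) = (((d : ℝ) / (d - ε)) ^ (2 * k))⁻¹ := by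
    rw [abs_div, abs_sub_comm, abs_of_pos (sub_pos.2 hεd), abs_of_pos hd, ← inv_pow, inv_div]
  have : Nonempty V := ⟨m⟩
  calc (⨆ v, |φ v|) ≤ |φ m| := ciSup_le hm
    _ = ((d : ℝ) / (d - ε)) ^ (2 * k) * (|(ε - d) / d| ^ (2 * k) * |φ m|) := by
        rw [hratio, ← mul_assoc, mul_inv_cancel₀ (pow_ne_zero _ (div_pos hd (sub_pos.2 hεd)).ne'),
          one_mul]
    _ ≤ _ := by rw [mul_assoc]; gcongr

theorem sup_norm_bound_via_random_walk
    {V : Type*} [Fintype V] [DecidableEq V]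
    (G : SimpleGraph V) [DecidableRel G.Adj] (d : ℕ)
    (hreg : G.IsRegularOfDegree d)
    (φ : V → ℝ) (ε : ℝ) (hε0 : 0 ≤ ε) (hεd : ε < d)
    (heig : ((d : ℝ) • (1 : Matrix V V ℝ) + G.adjMatrix ℝ) *ᵥ φ = ε • φ)
    (m : V) (hm : ∀ v : V, |φ v| ≤ |φ m|) (k : ℕ) :
    (⨆ v, |φ v|)
      ≤ ((d : ℝ) / ((d : ℝ) - ε)) ^ (2 * k)
          * Real.sqrt (∑ j : V,
              (((((d : ℝ)⁻¹ • G.adjMatrix ℝ) ^ (2 * k)) *ᵥ Pi.single m 1) j) ^ 2)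
          * Real.sqrt (∑ v, φ v ^ 2) :=
  sup_norm_bound_via_random_walk_general G d φ ε hε0 hεd heig m hm k
end
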